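/- arXiv:2605.28668 — 3 statements merged into one kernel-verified Lean document; each statement's English description precedes it below -/
import Mathlib

section
/- Equality |A|^n = n^{n/2} |det A| holds for a real n×n matrix A (with Frobenius norm) if and only if A is a conformal matrix, i.e. AᵀA = λ·Id for some λ ≥ 0. -/
/-!
`AᵀA` is positive semidefinite with eigenvalues `μᵢ ≥ 0`, and `‖A‖² = ∑ μᵢ`, `(det A)² = ∏ μᵢ`.
Squared, the equality becomes the equality case `(∑ μᵢ / n)ⁿ = ∏ μᵢ` of AM-GM, i.e. all `μᵢ`
are equal, which by the spectral theorem says exactly that `AᵀA` is a scalar matrix.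
-/

noncomputable def frobNorm {n : ℕ} (A : Matrix (Fin n) (Fin n) ℝ) : ℝ :=
  Real.sqrt (Matrix.trace (A.transpose * A))

open Finset
open scoped Matrix ComplexOrder

theorem Real.sum_pow_card_eq_card_pow_mul_prod_iff {ι : Type*} [Fintype ι] {z : ι → ℝ}
    (hz : ∀ i, 0 ≤ z i) :
    (∑ i, z i) ^ Fintype.card ι = (Fintype.card ι : ℝ) ^ Fintype.card ι * ∏ i, z i ↔
      ∀ i, z i = (∑ j, z j) / Fintype.card ι := by
  rcases isEmpty_or_nonempty ι with hι | hι
  · simp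
  set n := Fintype.card ι
  have hn : (0 : ℝ) < n := by positivity
  have hmean : ∑ i, (n : ℝ)⁻¹ * z i = (∑ i, z i) / n := by
    rw [← mul_sum, inv_mul_eq_div]
  have amgm := Real.geom_mean_eq_arith_mean_weighted_iff_of_pos' univ (fun _ ↦ (n : ℝ)⁻¹) z
    (fun _ _ ↦ inv_pos.mpr hn) (by simp [n, hn.ne']) (fun i _ ↦ hz i)
  rw [Real.finsetProd_rpow _ _ (fun i _ ↦ hz i), hmean,
    Real.rpow_inv_eq (prod_nonneg fun i _ ↦ hz i) (div_nonneg (sum_nonneg fun i _ ↦ hz i) hn.le)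
      hn.ne', Real.rpow_natCast] at amgm
  simpa [div_pow, eq_div_iff (pow_pos hn n).ne', mul_comm, eq_comm] using amgm

namespace Matrix

theorem posSemidef_transpose_mul_self {m n : Type*} [Fintype m] [Fintype n] (A : Matrix m n ℝ) :
    (Aᵀ * A).PosSemidef := by
  simpa using posSemidef_conjTranspose_mul_self A

variable {𝕜 ι : Type*} [RCLike 𝕜] [Fintype ι] [DecidableEq ι]

theorem IsHermitian.eq_smul_one_of_eigenvalues_eq {A : Matrix ι ι 𝕜} (hA : A.IsHermitian)
    {c : ℝ} (h : ∀ i, hA.eigenvalues i = c) : A = (c : 𝕜) • 1 := by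
  have hdiag : diagonal (RCLike.ofReal ∘ hA.eigenvalues) = (c : 𝕜) • (1 : Matrix ι ι 𝕜) := by
    rw [smul_one_eq_diagonal]
    exact congrArg diagonal (funext fun i ↦ congrArg _ (h i))
  rw [hA.spectral_theorem, hdiag, map_smul, map_one]

theorem PosSemidef.trace_pow_card_eq_card_pow_mul_det_iff {A : Matrix ι ι 𝕜}
    (hA : A.PosSemidef) :
    A.trace ^ Fintype.card ι = (Fintype.card ι : 𝕜) ^ Fintype.card ι * A.det ↔
      ∃ c : ℝ, 0 ≤ c ∧ A = (c : 𝕜) • 1 := by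
  constructor
  · intro h
    set μ := hA.isHermitian.eigenvalues
    rw [hA.isHermitian.trace_eq_sum_eigenvalues, hA.isHermitian.det_eq_prod_eigenvalues] at h
    have hμ : (∑ i, μ i) ^ Fintype.card ι = (Fintype.card ι : ℝ) ^ Fintype.card ι * ∏ i, μ i := by
      exact_mod_cast h
    rw [Real.sum_pow_card_eq_card_pow_mul_prod_iff hA.eigenvalues_nonneg] at hμ
    exact ⟨_, div_nonneg (sum_nonneg fun i _ ↦ hA.eigenvalues_nonneg i) (Nat.cast_nonneg _),
      hA.isHermitian.eq_smul_one_of_eigenvalues_eq hμ⟩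
  · rintro ⟨c, -, rfl⟩
    simp only [trace_smul, trace_one, det_smul, det_one, smul_eq_mul]
    ring

end Matrix

theorem sq_frobNorm {n : ℕ} (A : Matrix (Fin n) (Fin n) ℝ) : frobNorm A ^ 2 = (Aᵀ * A).trace :=
  Real.sq_sqrt A.posSemidef_transpose_mul_self.trace_nonneg

theorem frobNorm_pow_eq_iff {n : ℕ} (A : Matrix (Fin n) (Fin n) ℝ) :
    frobNorm A ^ n = (n : ℝ) ^ ((n : ℝ) / 2) * |A.det| ↔
      (Aᵀ * A).trace ^ n = (n : ℝ) ^ n * (Aᵀ * A).det := by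
  have hsqrt : ((n : ℝ) ^ ((n : ℝ) / 2)) ^ 2 = (n : ℝ) ^ n := by
    rw [← Real.rpow_natCast _ 2, ← Real.rpow_mul (Nat.cast_nonneg n)]
    norm_num
  have hfrob : 0 ≤ frobNorm A ^ n := pow_nonneg (Real.sqrt_nonneg _) n
  rw [← sq_eq_sq₀ hfrob (by positivity), ← pow_mul, mul_comm n, pow_mul, sq_frobNorm,
    mul_pow, hsqrt, sq_abs, sq, Matrix.det_mul, Matrix.det_transpose]

theorem frobenius_pow_eq_det_iff_conformal_general {n : ℕ}
    (A : Matrix (Fin n) (Fin n) ℝ) :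
    frobNorm A ^ n = (n : ℝ) ^ ((n : ℝ) / 2) * |A.det| ↔
      ∃ lam : ℝ, 0 ≤ lam ∧ A.transpose * A = lam • (1 : Matrix (Fin n) (Fin n) ℝ) := by
  rw [frobNorm_pow_eq_iff]
  simpa only [Fintype.card_fin, RCLike.ofReal_real_eq_id, id] using
    A.posSemidef_transpose_mul_self.trace_pow_card_eq_card_pow_mul_det_iff

/-- Equality `‖A‖ⁿ = n^{n/2} |det A|` (Frobenius norm) holds for a real
`n × n` matrix `A` iff `A` is conformal, i.e. `Aᵀ A = λ • Id` for some `λ ≥ 0`. -/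
theorem frobenius_pow_eq_det_iff_conformal {n : ℕ} (hn : 2 ≤ n)
    (A : Matrix (Fin n) (Fin n) ℝ) :
    frobNorm A ^ n = (n : ℝ) ^ ((n : ℝ) / 2) * |A.det| ↔
      ∃ lam : ℝ, 0 ≤ lam ∧ A.transpose * A = lam • (1 : Matrix (Fin n) (Fin n) ℝ) :=
  frobenius_pow_eq_det_iff_conformal_general A
end

section
/- Let n ≥ 2 and let k ≥ (n−2)/2 with k ≥ 1. For every f ∈ C¹([0,1]) with f(0) = 0, it holds that f(1)² ≤ (1/k) ∫₀¹ (f'(r)² + (k(k+n−2)/r²) f(r)²) r^{n−1} dr. -/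
/-!
With `n = m + 2`, the energy density `(f'² + k(k+m) f²/r²) r^(m+1)` exceeds the derivative
`k (2 f f' r^m + m f² r^(m-1))` of `k f(r)² r^m` by the square `(f' - k f/r)² r^(m+1)`.
Integrating over `[0, 1]` and using `f 0 = 0` gives `k f(1)² ≤ ∫ energy`. Both integrands are
continuous functions of `(r, f r / r, f' r)`, and `f r / r` stays bounded since `f 0 = 0`, so they
are integrable.
-/

open Set MeasureTheory intervalIntegral

lemma intervalIntegrable_of_continuousOn_Ioo_of_norm_le {E : Type*} [NormedAddCommGroup E]
    {ψ : ℝ → E} {a b M : ℝ} (hab : a ≤ b) (hc : ContinuousOn ψ (Ioo a b))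
    (hM : ∀ r ∈ Ioo a b, ‖ψ r‖ ≤ M) :
    IntervalIntegrable ψ volume a b := by
  rw [intervalIntegrable_iff_integrableOn_Ioo_of_le hab]
  refine (integrable_const M).mono' (hc.aestronglyMeasurable measurableSet_Ioo) ?_
  filter_upwards [ae_restrict_mem measurableSet_Ioo] with r hr using hM r hr

lemma exists_abs_div_le_and_abs_deriv_le {f : ℝ → ℝ} (hf : ContDiffOn ℝ 1 f (Icc 0 1))
    (hf0 : f 0 = 0) : ∃ C, ∀ r ∈ Ioo (0 : ℝ) 1, |f r / r| ≤ C ∧ |deriv f r| ≤ C := by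
  obtain ⟨C, hC⟩ := isCompact_Icc.exists_bound_of_continuousOn
    (hf.continuousOn_derivWithin (uniqueDiffOn_Icc zero_lt_one) le_rfl)
  refine ⟨C, fun r hr => ⟨?_, ?_⟩⟩
  · have := Convex.norm_image_sub_le_of_norm_derivWithin_le
      (hf.differentiableOn one_ne_zero) hC (convex_Icc 0 1)
      (left_mem_Icc.2 zero_le_one) (Ioo_subset_Icc_self hr)
    rw [abs_div, abs_of_pos hr.1, div_le_iff₀ hr.1]
    simpa [hf0, abs_of_pos hr.1] using this
  · rw [← derivWithin_of_mem_nhds (Icc_mem_nhds hr.1 hr.2)]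
    exact hC r (Ioo_subset_Icc_self hr)

lemma intervalIntegrable_comp_div_self_deriv {f : ℝ → ℝ} (hf : ContDiffOn ℝ 1 f (Icc 0 1))
    (hf0 : f 0 = 0) {Q : ℝ × ℝ × ℝ → ℝ} (hQ : Continuous Q) :
    IntervalIntegrable (fun r => Q (r, f r / r, deriv f r)) volume 0 1 := by
  obtain ⟨C, hC⟩ := exists_abs_div_le_and_abs_deriv_le hf hf0
  obtain ⟨M, hM⟩ := (isCompact_Icc.prod (isCompact_Icc.prod isCompact_Icc))
    |>.exists_bound_of_continuousOn (s := Icc 0 1 ×ˢ Icc (-C) C ×ˢ Icc (-C) C) hQ.continuousOn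
  have hfc : ContinuousOn f (Ioo 0 1) := hf.continuousOn.mono Ioo_subset_Icc_self
  have hdc : ContinuousOn (deriv f) (Ioo 0 1) :=
    (hf.mono Ioo_subset_Icc_self).continuousOn_deriv_of_isOpen isOpen_Ioo le_rfl
  refine intervalIntegrable_of_continuousOn_Ioo_of_norm_le (M := M) zero_le_one
    (hQ.comp_continuousOn (continuousOn_id.prodMk
      ((hfc.div continuousOn_id fun r hr => hr.1.ne').prodMk hdc))) fun r hr => ?_
  exact hM _ ⟨Ioo_subset_Icc_self hr, abs_le.1 (hC r hr).1, abs_le.1 (hC r hr).2⟩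

lemma hasDerivAt_sq_mul_pow {f : ℝ → ℝ} {f' x : ℝ} (hf : HasDerivAt f f' x) (hx : x ≠ 0)
    (m : ℕ) : HasDerivAt (fun r => f r ^ 2 * r ^ m)
      ((m * (f x / x) ^ 2 + 2 * (f x / x * f')) * x ^ (m + 1)) x := by
  refine ((hf.fun_pow 2).fun_mul (hasDerivAt_pow m x)).congr_deriv ?_
  simp only [Nat.cast_ofNat, Nat.add_one_sub_one, pow_one]
  cases m with
  | zero => simp [field]
  | succ m =>
    simp only [Nat.add_sub_cancel]
    field_simp
    push_cast
    ring

theorem mul_sq_le_integral_weighted_energy {f : ℝ → ℝ} (hf : ContDiffOn ℝ 1 f (Icc 0 1))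
    (hf0 : f 0 = 0) (k : ℝ) (m : ℕ) :
    k * f 1 ^ 2 ≤ ∫ r in (0 : ℝ)..1,
      (deriv f r ^ 2 + k * (k + m) / r ^ 2 * f r ^ 2) * r ^ (m + 1) := by
  have hderiv : ∀ x ∈ Ioo (0 : ℝ) 1, HasDerivAt (fun r => k * (f r ^ 2 * r ^ m))
      (k * ((m * (f x / x) ^ 2 + 2 * (f x / x * deriv f x)) * x ^ (m + 1))) x := fun x hx =>
    (hasDerivAt_sq_mul_pow (((hf.differentiableOn one_ne_zero x (Ioo_subset_Icc_self hx))
      |>.differentiableAt (Icc_mem_nhds hx.1 hx.2)).hasDerivAt) hx.1.ne' m).const_mul k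
  have hg' := intervalIntegrable_comp_div_self_deriv hf hf0
    (Q := fun p => k * ((m * p.2.1 ^ 2 + 2 * (p.2.1 * p.2.2)) * p.1 ^ (m + 1))) (by fun_prop)
  have hφ : IntervalIntegrable (fun r => (deriv f r ^ 2 + k * (k + m) / r ^ 2 * f r ^ 2) *
      r ^ (m + 1)) volume 0 1 :=
    (intervalIntegrable_comp_div_self_deriv hf hf0
      (Q := fun p => (p.2.2 ^ 2 + k * (k + m) * p.2.1 ^ 2) * p.1 ^ (m + 1)) (by fun_prop)).congr
      fun r _ => by ring
  have hfc := hf.continuousOn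
  calc k * f 1 ^ 2 = k * (f 1 ^ 2 * 1 ^ m) - k * (f 0 ^ 2 * 0 ^ m) := by simp [hf0]
    _ = _ := (integral_eq_sub_of_hasDerivAt_of_le (f := fun r => k * (f r ^ 2 * r ^ m))
        zero_le_one (by fun_prop) hderiv hg').symm
    _ ≤ _ := integral_mono_on zero_le_one hg' hφ fun r hr => by
      have hsq : (deriv f r ^ 2 + k * (k + m) / r ^ 2 * f r ^ 2) * r ^ (m + 1) -
          k * ((m * (f r / r) ^ 2 + 2 * (f r / r * deriv f r)) * r ^ (m + 1)) =
          (deriv f r - k * (f r / r)) ^ 2 * r ^ (m + 1) := by ring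
      have := mul_nonneg (sq_nonneg (deriv f r - k * (f r / r))) (pow_nonneg hr.1 (m + 1))
      linarith

theorem trace_inequality_spherical_harmonics_general (n k : ℕ) (hn : 2 ≤ n) (hk : 1 ≤ k)
    (f : ℝ → ℝ)
    (hf : ContDiffOn ℝ 1 f (Set.Icc 0 1)) (hf0 : f 0 = 0) :
    f 1 ^ 2 ≤ (1 / (k : ℝ)) *
      ∫ r in (0 : ℝ)..1,
        (deriv f r ^ 2 + (k : ℝ) * ((k : ℝ) + (n : ℝ) - 2) / r ^ 2 * f r ^ 2) *
          r ^ (n - 1) := by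
  obtain ⟨m, rfl⟩ : ∃ m, n = m + 2 := ⟨n - 2, by omega⟩
  have hk0 : (0 : ℝ) < k := by exact_mod_cast hk
  rw [one_div, inv_mul_eq_div, le_div_iff₀ hk0, mul_comm, Nat.add_sub_assoc one_le_two]
  push_cast
  simpa only [← add_assoc, add_sub_cancel_right] using
    mul_sq_le_integral_weighted_energy hf hf0 k m

/-- Sharp one-dimensional trace inequality: for `n ≥ 2`, `k ≥ 1` with
`k ≥ (n−2)/2`, and every `f ∈ C¹([0,1])` with `f(0) = 0`,
`f(1)² ≤ (1/k) ∫₀¹ (f'(r)² + (k(k+n−2)/r²) f(r)²) r^{n−1} dr`. -/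
theorem trace_inequality_spherical_harmonics (n k : ℕ) (hn : 2 ≤ n) (hk : 1 ≤ k)
    (hk' : ((n : ℝ) - 2) / 2 ≤ (k : ℝ)) (f : ℝ → ℝ)
    (hf : ContDiffOn ℝ 1 f (Set.Icc 0 1)) (hf0 : f 0 = 0) :
    f 1 ^ 2 ≤ (1 / (k : ℝ)) *
      ∫ r in (0 : ℝ)..1,
        (deriv f r ^ 2 + (k : ℝ) * ((k : ℝ) + (n : ℝ) - 2) / r ^ 2 * f r ^ 2) *
          r ^ (n - 1) :=
  trace_inequality_spherical_harmonics_general n k hn hk f hf hf0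
end

section
/- Let N₁ be an (n−1)×(n−1) real matrix and N₂ an (n−1)×1 real matrix, and form the n×n block matrix N = [[N₁, N₂],[0, 0]]. Then exp(N) = [[exp(N₁), exp(N₁)·(∫₀¹ exp(−s N₁) ds)·N₂],[0, 1]]. -/
attribute [local instance] Matrix.normedAddCommGroup Matrix.normedSpace

open NormedSpace intervalIntegral

/-!
Both sides are the value at `t = 1` of solutions of `X' = N X`, `X 0 = 1`: for the right-hand side
with `t` in place of `1` (and `∫₀ᵗ`), differentiating block by block and using
`exp (t N₁) exp (-t N₁) = 1` gives exactly the blocks of `N X`. Uniqueness of such solutions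
follows because `exp (-t N) X t` has derivative `exp (-t N) (-N) X + exp (-t N) N X = 0`.
-/

theorem eq_exp_smul_mul_of_hasDerivAt {𝕂 𝔸 : Type*} [RCLike 𝕂] [NormedRing 𝔸]
    [NormedAlgebra 𝕂 𝔸] [CompleteSpace 𝔸] {N : 𝔸} {M : 𝕂 → 𝔸}
    (hM : ∀ t, HasDerivAt M (N * M t) t) (t : 𝕂) :
    M t = exp (t • N) * M 0 := by
  let _ := NormedAlgebra.restrictScalars ℚ 𝕂 𝔸
  have hderiv : ∀ s, HasDerivAt (fun s => exp (-(s • N)) * M s) 0 s := by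
    intro s
    have hexp := hasDerivAt_exp_smul_const (-N) s
    simp only [smul_neg] at hexp
    convert hexp.fun_mul (hM s) using 1
    noncomm_ring
  have hconst : exp (-(t • N)) * M t = M 0 := by
    simpa using is_const_of_deriv_eq_zero (fun s => (hderiv s).differentiableAt)
      (fun s => (hderiv s).deriv) t 0
  rw [← hconst, ← mul_assoc, ← exp_add_of_commute (Commute.refl _).neg_right, add_neg_cancel,
    exp_zero, one_mul]

section MatrixDeriv

variable {𝕜 : Type*} [NontriviallyNormedField 𝕜] {l m n p : Type*} {t : 𝕜}

theorem HasDerivAt.matrix_mul {R : Type*} [NormedRing R] [NormedAlgebra 𝕜 R]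
    [Fintype m] [Fintype n] {A : 𝕜 → Matrix l m R} {B : 𝕜 → Matrix m n R}
    {A' : Matrix l m R} {B' : Matrix m n R} (hA : HasDerivAt A A' t) (hB : HasDerivAt B B' t) :
    HasDerivAt (fun s => A s * B s) (A' * B t + A t * B') t := by
  refine hasDerivAt_pi.2 fun i => hasDerivAt_pi.2 fun j => ?_
  simp only [Matrix.add_apply, Matrix.mul_apply, ← Finset.sum_add_distrib]
  exact HasDerivAt.fun_sum fun k _ =>
    (hasDerivAt_pi.1 (hasDerivAt_pi.1 hA i) k).mul (hasDerivAt_pi.1 (hasDerivAt_pi.1 hB k) j)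

theorem HasDerivAt.matrix_fromBlocks {E : Type*} [NormedAddCommGroup E] [NormedSpace 𝕜 E]
    [Fintype l] [Fintype m] {A : 𝕜 → Matrix n l E} {B : 𝕜 → Matrix n m E}
    {C : 𝕜 → Matrix p l E} {D : 𝕜 → Matrix p m E} {A' B' C' D'}
    (hA : HasDerivAt A A' t) (hB : HasDerivAt B B' t) (hC : HasDerivAt C C' t)
    (hD : HasDerivAt D D' t) :
    HasDerivAt (fun s => Matrix.fromBlocks (A s) (B s) (C s) (D s))
      (Matrix.fromBlocks A' B' C' D') t := by
  refine hasDerivAt_pi.2 fun i => hasDerivAt_pi.2 fun j => ?_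
  rcases i with i | i <;> rcases j with j | j
  · exact hasDerivAt_pi.1 (hasDerivAt_pi.1 hA i) j
  · exact hasDerivAt_pi.1 (hasDerivAt_pi.1 hB i) j
  · exact hasDerivAt_pi.1 (hasDerivAt_pi.1 hC i) j
  · exact hasDerivAt_pi.1 (hasDerivAt_pi.1 hD i) j

end MatrixDeriv

namespace Matrix

variable {𝕂 : Type*} [RCLike 𝕂] {n : Type*} [Fintype n] [DecidableEq n]

/- With the operator norm matrices form a Banach algebra; `HasDerivAt` and `exp` only see its
topology, which is definitionally that of the entrywise sup norm. -/

theorem hasDerivAt_exp_smul_const' (A : Matrix n n 𝕂) (t : 𝕂) :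
    HasDerivAt (fun s : 𝕂 => exp (s • A)) (A * exp (t • A)) t := by
  open scoped Norms.Operator in exact _root_.hasDerivAt_exp_smul_const' A t

theorem continuous_exp : Continuous (exp : Matrix n n 𝕂 → Matrix n n 𝕂) := by
  open scoped Norms.Operator in exact exp_continuous

theorem eq_exp_smul_mul_of_hasDerivAt {N : Matrix n n 𝕂} {M : 𝕂 → Matrix n n 𝕂}
    (hM : ∀ t, HasDerivAt M (N * M t) t) (t : 𝕂) :
    M t = exp (t • N) * M 0 := by
  open scoped Norms.Operator in exact _root_.eq_exp_smul_mul_of_hasDerivAt hM t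

theorem hasDerivAt_integral_exp_neg_smul (A : Matrix n n ℝ) (t : ℝ) :
    HasDerivAt (fun u => ∫ s in (0 : ℝ)..u, exp (-(s • A))) (exp (-(t • A))) t :=
  (continuous_exp.comp (by fun_prop)).integral_hasStrictDerivAt 0 t |>.hasDerivAt

end Matrix

/-- Block triangular matrix exponential: for `N₁` an `m × m` real matrix and
`N₂` an `m × 1` real matrix, with `N = [[N₁, N₂], [0, 0]]`, one has
`exp N = [[exp N₁, exp N₁ · (∫₀¹ exp(−s N₁) ds) · N₂], [0, 1]]`. -/
theorem exp_block_triangular (m : ℕ) (N₁ : Matrix (Fin m) (Fin m) ℝ)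
    (N₂ : Matrix (Fin m) (Fin 1) ℝ) :
    exp (Matrix.fromBlocks N₁ N₂ 0 0) =
      Matrix.fromBlocks (exp N₁)
        (exp N₁ * (∫ s in (0 : ℝ)..1, exp (-(s • N₁))) * N₂) (0 : Matrix (Fin 1) (Fin m) ℝ) (1 : Matrix (Fin 1) (Fin 1) ℝ) := by
  set M : ℝ → Matrix (Fin m ⊕ Fin 1) (Fin m ⊕ Fin 1) ℝ := fun t =>
    Matrix.fromBlocks (exp (t • N₁)) (exp (t • N₁) * (∫ s in (0 : ℝ)..t, exp (-(s • N₁))) * N₂) 0 1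
  have hM : ∀ t, HasDerivAt M (Matrix.fromBlocks N₁ N₂ 0 0 * M t) t := by
    intro t
    have hE := Matrix.hasDerivAt_exp_smul_const' N₁ t
    have hB := (hE.matrix_mul (Matrix.hasDerivAt_integral_exp_neg_smul N₁ t)).matrix_mul
      (hasDerivAt_const t N₂)
    convert hE.matrix_fromBlocks hB (hasDerivAt_const t (0 : Matrix (Fin 1) (Fin m) ℝ))
      (hasDerivAt_const t (1 : Matrix (Fin 1) (Fin 1) ℝ)) using 1
    have hinv : exp (t • N₁) * exp (-(t • N₁)) = 1 := by
      rw [← Matrix.exp_add_of_commute _ _ (Commute.refl (t • N₁)).neg_right, add_neg_cancel,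
        exp_zero]
    simp [M, Matrix.fromBlocks_multiply, hinv, Matrix.add_mul, Matrix.mul_assoc]
  have hM0 : M 0 = 1 := by simp [M]
  have hM1 := Matrix.eq_exp_smul_mul_of_hasDerivAt hM 1
  rw [hM0, mul_one, one_smul] at hM1
  exact hM1.symm.trans (by simp only [M, one_smul])
end
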